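/- arXiv:2402.15958 — 8 statements merged into one kernel-verified Lean document; each statement's English description precedes it below -/
import Mathlib

section
/- Along any solution of the dynamical system da/dt = Bc, dB/dt = a c^T, dc/dt = B^T a (with a, c ∈ ℝ^m and B an m×m real matrix), for each index k the quantity a_k² − Σ_{k'} B_{kk'}² is constant in time. -/
/-! Differentiating `a_k² − ∑_{k'} B_{kk'}²` gives `2 a_k ∑_j B_{kj} c_j − ∑_j 2 B_{kj} a_k c_j = 0`,
so the quantity has zero derivative everywhere and is therefore constant. -/

theorem hasDerivAt_sq_sub_sum_sq_zero {𝕜 ι : Type*} [NontriviallyNormedField 𝕜] [Fintype ι]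
    {α : 𝕜 → 𝕜} {β : ι → 𝕜 → 𝕜} {γ : ι → 𝕜} {t : 𝕜}
    (hα : HasDerivAt α (∑ j, β j t * γ j) t) (hβ : ∀ j, HasDerivAt (β j) (α t * γ j) t) :
    HasDerivAt (fun s => α s ^ 2 - ∑ j, β j s ^ 2) 0 t := by
  have hα2 := hα.fun_pow 2
  have hβ2 := HasDerivAt.fun_sum fun j (_ : j ∈ Finset.univ) => (hβ j).fun_pow 2
  refine (hα2.fun_sub hβ2).congr_deriv ?_
  rw [Finset.mul_sum, ← Finset.sum_sub_distrib]
  exact Finset.sum_eq_zero fun j _ => by ring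

theorem stmt_0_general (m : ℕ) (a c : ℝ → Fin m → ℝ) (B : ℝ → Fin m → Fin m → ℝ)
    (ha : ∀ t i, HasDerivAt (fun s => a s i) (∑ j, B t i j * c t j) t)
    (hB : ∀ t i j, HasDerivAt (fun s => B s i j) (a t i * c t j) t) :
    ∀ (k : Fin m) (t s : ℝ),
      a t k ^ 2 - ∑ k', B t k k' ^ 2 = a s k ^ 2 - ∑ k', B s k k' ^ 2 := by
  intro k
  have hderiv (u : ℝ) :
      HasDerivAt (fun r => a r k ^ 2 - ∑ k', B r k k' ^ 2) 0 u :=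
    hasDerivAt_sq_sub_sum_sq_zero (ha u k) (hB u k)
  exact is_const_of_deriv_eq_zero (fun u => (hderiv u).differentiableAt) fun u => (hderiv u).deriv

/-- Along any solution of the system `a' = B c`, `B' = a cᵀ`, `c' = Bᵀ a`,
for each index `k` the quantity `a_k² − Σ_{k'} B_{k k'}²` is constant in time. -/
theorem stmt_0 (m : ℕ) (a c : ℝ → Fin m → ℝ) (B : ℝ → Fin m → Fin m → ℝ)
    (ha : ∀ t i, HasDerivAt (fun s => a s i) (∑ j, B t i j * c t j) t)
    (hB : ∀ t i j, HasDerivAt (fun s => B s i j) (a t i * c t j) t)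
    (hc : ∀ t j, HasDerivAt (fun s => c s j) (∑ i, B t i j * a t i) t) :
    ∀ (k : Fin m) (t s : ℝ),
      a t k ^ 2 - ∑ k', B t k k' ^ 2 = a s k ^ 2 - ∑ k', B s k k' ^ 2 :=
  stmt_0_general m a c B ha hB
end

section
/- Along any solution of the dynamical system da/dt = Bc, dB/dt = a c^T, dc/dt = B^T a, for each index k' the quantity c_{k'}² − Σ_k B_{kk'}² is constant in time. -/
/-! Both `c_{k'}²` and `Σ_k B_{k k'}²` have derivative `2 c_{k'} Σ_k B_{k k'} a_k`
(by `c' = Bᵀ a` and `B' = a cᵀ` respectively), so their difference has derivative zero. -/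

theorem hasDerivAt_sq_sub_sum_sq_eq_zero {ι : Type*} [Fintype ι] {a c : ℝ → ι → ℝ}
    {B : ℝ → ι → ι → ℝ} {u : ℝ} (k' : ι)
    (hB : ∀ k, HasDerivAt (fun s => B s k k') (a u k * c u k') u)
    (hc : HasDerivAt (fun s => c s k') (∑ i, B u i k' * a u i) u) :
    HasDerivAt (fun s => c s k' ^ 2 - ∑ k, B s k k' ^ 2) 0 u := by
  have hc_sq : HasDerivAt (fun s => c s k' ^ 2) (2 * c u k' * ∑ k, B u k k' * a u k) u := by
    simpa using hc.fun_pow 2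
  have hB_sq : HasDerivAt (fun s => ∑ k, B s k k' ^ 2) (∑ k, 2 * B u k k' * (a u k * c u k')) u :=
    HasDerivAt.fun_sum fun k _ => by simpa using (hB k).fun_pow 2
  refine (hc_sq.fun_sub hB_sq).congr_deriv ?_
  rw [sub_eq_zero, Finset.mul_sum]
  exact Finset.sum_congr rfl fun k _ => by ring

theorem stmt_1_general (m : ℕ) (a c : ℝ → Fin m → ℝ) (B : ℝ → Fin m → Fin m → ℝ)
    (hB : ∀ t i j, HasDerivAt (fun s => B s i j) (a t i * c t j) t)
    (hc : ∀ t j, HasDerivAt (fun s => c s j) (∑ i, B t i j * a t i) t) :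
    ∀ (k' : Fin m) (t s : ℝ),
      c t k' ^ 2 - ∑ k, B t k k' ^ 2 = c s k' ^ 2 - ∑ k, B s k k' ^ 2 := by
  intro k'
  have hderiv u := hasDerivAt_sq_sub_sum_sq_eq_zero k' (fun k => hB u k k') (hc u k')
  exact is_const_of_deriv_eq_zero (fun u => (hderiv u).differentiableAt) fun u => (hderiv u).deriv

/-- Along any solution of the system `a' = B c`, `B' = a cᵀ`, `c' = Bᵀ a`,
for each index `k'` the quantity `c_{k'}² − Σ_k B_{k k'}²` is constant in time. -/
theorem stmt_1 (m : ℕ) (a c : ℝ → Fin m → ℝ) (B : ℝ → Fin m → Fin m → ℝ)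
    (ha : ∀ t i, HasDerivAt (fun s => a s i) (∑ j, B t i j * c t j) t)
    (hB : ∀ t i j, HasDerivAt (fun s => B s i j) (a t i * c t j) t)
    (hc : ∀ t j, HasDerivAt (fun s => c s j) (∑ i, B t i j * a t i) t) :
    ∀ (k' : Fin m) (t s : ℝ),
      c t k' ^ 2 - ∑ k, B t k k' ^ 2 = c s k' ^ 2 - ∑ k, B s k k' ^ 2 :=
  stmt_1_general m a c B hB hc
end

section
/- Along any solution of the dynamical system da/dt = Bc, dB/dt = a c^T, dc/dt = B^T a, the energy E = a^T B c satisfies E'(t) = ‖a'(t)‖² + ‖c'(t)‖² + ‖a(t)‖² ‖c(t)‖². -/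
/-!
Differentiating `E = ∑ i j, aᵢ Bᵢⱼ cⱼ` by the product rule gives three double sums, one per factor.
Substituting the equations of motion, the `a'` and `c'` terms become `‖Bc‖² = ‖a'‖²` and
`‖Bᵀa‖² = ‖c'‖²`, while `B' = a cᵀ` turns the middle term into `‖a‖² ‖c‖²`.
-/

open Finset

section Algebra

variable {R ι κ : Type*} [CommSemiring R] [Fintype ι] [Fintype κ]

theorem sum_sum_mul_mul_eq_sum_mul_sum (u : ι → R) (B : ι → κ → R) (v : κ → R) :
    ∑ i, ∑ j, u i * B i j * v j = ∑ i, u i * ∑ j, B i j * v j := by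
  simp only [mul_sum, mul_assoc]

theorem sum_sum_mul_mul_eq_sum_sum_mul (u : ι → R) (B : ι → κ → R) (v : κ → R) :
    ∑ i, ∑ j, u i * B i j * v j = ∑ j, (∑ i, B i j * u i) * v j := by
  rw [sum_comm]
  simp only [sum_mul, mul_comm (u _)]

theorem sum_sum_mul_mul_mul_eq_sum_sq_mul_sum_sq (u : ι → R) (v : κ → R) :
    ∑ i, ∑ j, u i * (u i * v j) * v j = (∑ i, u i ^ 2) * ∑ j, v j ^ 2 := by
  rw [sum_mul_sum]
  exact sum_congr rfl fun i _ => sum_congr rfl fun j _ => by ring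

end Algebra

theorem hasDerivAt_sum_sum_mul_mul {𝕜 ι κ : Type*} [NontriviallyNormedField 𝕜]
    [Fintype ι] [Fintype κ] {a : 𝕜 → ι → 𝕜} {B : 𝕜 → ι → κ → 𝕜} {c : 𝕜 → κ → 𝕜}
    {a' : ι → 𝕜} {B' : ι → κ → 𝕜} {c' : κ → 𝕜} {t : 𝕜}
    (ha : ∀ i, HasDerivAt (fun s => a s i) (a' i) t)
    (hB : ∀ i j, HasDerivAt (fun s => B s i j) (B' i j) t)
    (hc : ∀ j, HasDerivAt (fun s => c s j) (c' j) t) :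
    HasDerivAt (fun s => ∑ i, ∑ j, a s i * B s i j * c s j)
      (∑ i, ∑ j, a' i * B t i j * c t j + ∑ i, ∑ j, a t i * B' i j * c t j
        + ∑ i, ∑ j, a t i * B t i j * c' j) t := by
  simp only [← sum_add_distrib]
  refine HasDerivAt.fun_sum fun i _ => HasDerivAt.fun_sum fun j _ => ?_
  exact (((ha i).fun_mul (hB i j)).fun_mul (hc j)).congr_deriv (by ring)

/-- Along any solution, the energy `E = aᵀ B c` satisfies
`E' = ‖a'‖² + ‖c'‖² + ‖a‖² ‖c‖²`. -/
theorem stmt_3 (m : ℕ) (a c : ℝ → Fin m → ℝ) (B : ℝ → Fin m → Fin m → ℝ)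
    (ha : ∀ t i, HasDerivAt (fun s => a s i) (∑ j, B t i j * c t j) t)
    (hB : ∀ t i j, HasDerivAt (fun s => B s i j) (a t i * c t j) t)
    (hc : ∀ t j, HasDerivAt (fun s => c s j) (∑ i, B t i j * a t i) t)
    (E : ℝ → ℝ) (hE : ∀ t, E t = ∑ i, ∑ j, a t i * B t i j * c t j) :
    ∀ t : ℝ,
      HasDerivAt E
        ((∑ i, (∑ j, B t i j * c t j) ^ 2) + (∑ j, (∑ i, B t i j * a t i) ^ 2)
          + (∑ i, a t i ^ 2) * (∑ j, c t j ^ 2)) t := by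
  intro t
  rw [show E = _ from funext hE]
  refine (hasDerivAt_sum_sum_mul_mul (ha t) (hB t) (hc t)).congr_deriv ?_
  rw [sum_sum_mul_mul_eq_sum_mul_sum _ (B t), sum_sum_mul_mul_eq_sum_sum_mul (a t) (B t),
    sum_sum_mul_mul_mul_eq_sum_sq_mul_sum_sq]
  simp only [sq]
  ring
end

section
/- Along any solution of the dynamical system da/dt = Bc, dB/dt = a c^T, dc/dt = B^T a, the energy E = a^T B c satisfies the differential inequality E'(t) ≥ 3 E(t)^{4/3} whenever E(t) ≥ 0; in particular E is monotonically nondecreasing. -/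
/-!
Along the flow, `E' = ‖Bc‖² + ‖Bᵀa‖² + ‖a‖²‖c‖²`, which is nonnegative, so `E` is monotone.
Since `E = ⟨a, Bc⟩ = ⟨Bᵀa, c⟩`, Cauchy–Schwarz gives `E² ≤ ‖a‖²‖Bc‖²` and `E² ≤ ‖c‖²‖Bᵀa‖²`;
multiplying, `E⁴` is at most the product of the three summands of `E'`, and AM–GM turns this
into `27 E⁴ ≤ E'³`.
-/

open Matrix

lemma mul_mul_le_add_add_pow_three {x y z : ℝ} (hx : 0 ≤ x) (hy : 0 ≤ y) (hz : 0 ≤ z) :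
    27 * (x * y * z) ≤ (x + y + z) ^ 3 := by
  nlinarith [mul_nonneg hz (sq_nonneg (x - y)), mul_nonneg hx (sq_nonneg (y - z)),
    mul_nonneg hy (sq_nonneg (x - z)), mul_nonneg (add_nonneg (add_nonneg hx hy) hz)
      (add_nonneg (add_nonneg (sq_nonneg (x - y)) (sq_nonneg (y - z))) (sq_nonneg (x - z)))]

lemma three_mul_rpow_four_thirds_le {e S : ℝ} (he : 0 ≤ e) (hS : 0 ≤ S)
    (h : 27 * e ^ 4 ≤ S ^ 3) : 3 * e ^ ((4 : ℝ) / 3) ≤ S := by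
  refine le_of_pow_le_pow_left₀ three_ne_zero hS ?_
  calc (3 * e ^ ((4 : ℝ) / 3)) ^ 3 = 27 * e ^ ((4 : ℝ) / 3 * (3 : ℕ)) := by
        rw [mul_pow, Real.rpow_mul he, Real.rpow_natCast]; norm_num
    _ = 27 * e ^ 4 := by norm_num
    _ ≤ S ^ 3 := h

lemma three_mul_rpow_four_thirds_le_add_add_mul {e x y p q : ℝ} (he : 0 ≤ e) (hx : 0 ≤ x)
    (hy : 0 ≤ y) (hp : 0 ≤ p) (hq : 0 ≤ q) (hpx : e ^ 2 ≤ p * x) (hqy : e ^ 2 ≤ q * y) :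
    3 * e ^ ((4 : ℝ) / 3) ≤ x + y + p * q := by
  refine three_mul_rpow_four_thirds_le he (by positivity) ?_
  calc 27 * e ^ 4 = 27 * (e ^ 2 * e ^ 2) := by ring
    _ ≤ 27 * ((p * x) * (q * y)) := by gcongr
    _ = 27 * (x * y * (p * q)) := by ring
    _ ≤ (x + y + p * q) ^ 3 := mul_mul_le_add_add_pow_three hx hy (mul_nonneg hp hq)

namespace Matrix

lemma dotProduct_self_nonneg {ι : Type*} [Fintype ι] (v : ι → ℝ) : 0 ≤ v ⬝ᵥ v :=
  Finset.sum_nonneg fun i _ => mul_self_nonneg (v i)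

lemma sq_dotProduct_le {ι : Type*} [Fintype ι] (v w : ι → ℝ) :
    (v ⬝ᵥ w) ^ 2 ≤ (v ⬝ᵥ v) * (w ⬝ᵥ w) := by
  simpa only [dotProduct, ← sq] using Finset.sum_mul_sq_le_sq_mul_sq Finset.univ v w

lemma sum_sum_mul_mul_eq_dotProduct_mulVec {ι κ : Type*} [Fintype ι] [Fintype κ] (v : ι → ℝ)
    (M : Matrix ι κ ℝ) (w : κ → ℝ) : ∑ i, ∑ j, v i * M i j * w j = v ⬝ᵥ (M *ᵥ w) := by
  simp only [dotProduct, mulVec, Finset.mul_sum, mul_assoc]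

lemma hasDerivAt_dotProduct {ι : Type*} [Fintype ι] {u v : ℝ → ι → ℝ} {u' v' : ι → ℝ} {t : ℝ}
    (hu : ∀ i, HasDerivAt (fun s => u s i) (u' i) t)
    (hv : ∀ i, HasDerivAt (fun s => v s i) (v' i) t) :
    HasDerivAt (fun s => u s ⬝ᵥ v s) (u' ⬝ᵥ v t + u t ⬝ᵥ v') t := by
  simp only [dotProduct, ← Finset.sum_add_distrib]
  exact HasDerivAt.fun_sum fun i _ => (hu i).mul (hv i)

lemma hasDerivAt_mulVec {ι κ : Type*} [Fintype κ] {M : ℝ → Matrix ι κ ℝ} {v : ℝ → κ → ℝ}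
    {M' : Matrix ι κ ℝ} {v' : κ → ℝ} {t : ℝ}
    (hM : ∀ i j, HasDerivAt (fun s => M s i j) (M' i j) t)
    (hv : ∀ j, HasDerivAt (fun s => v s j) (v' j) t) (i : ι) :
    HasDerivAt (fun s => (M s *ᵥ v s) i) ((M' *ᵥ v t + M t *ᵥ v') i) t :=
  hasDerivAt_dotProduct (hM i) hv

lemma three_mul_dotProduct_mulVec_rpow_le {ι κ : Type*} [Fintype ι] [Fintype κ]
    (a : ι → ℝ) (M : Matrix ι κ ℝ) (c : κ → ℝ) (h : 0 ≤ a ⬝ᵥ (M *ᵥ c)) :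
    3 * (a ⬝ᵥ (M *ᵥ c)) ^ ((4 : ℝ) / 3) ≤
      (M *ᵥ c) ⬝ᵥ (M *ᵥ c) + (Mᵀ *ᵥ a) ⬝ᵥ (Mᵀ *ᵥ a) + (a ⬝ᵥ a) * (c ⬝ᵥ c) := by
  have hswap : a ⬝ᵥ (M *ᵥ c) = c ⬝ᵥ (Mᵀ *ᵥ a) := by
    rw [dotProduct_mulVec, ← mulVec_transpose, dotProduct_comm]
  refine three_mul_rpow_four_thirds_le_add_add_mul h (dotProduct_self_nonneg _)
    (dotProduct_self_nonneg _) (dotProduct_self_nonneg _) (dotProduct_self_nonneg _)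
    (sq_dotProduct_le _ _) ?_
  rw [hswap]
  exact sq_dotProduct_le _ _

lemma hasDerivAt_energy {ι κ : Type*} [Fintype ι] [Fintype κ] {a : ℝ → ι → ℝ}
    {B : ℝ → Matrix ι κ ℝ} {c : ℝ → κ → ℝ} {t : ℝ}
    (ha : ∀ i, HasDerivAt (fun s => a s i) ((B t *ᵥ c t) i) t)
    (hB : ∀ i j, HasDerivAt (fun s => B s i j) (vecMulVec (a t) (c t) i j) t)
    (hc : ∀ j, HasDerivAt (fun s => c s j) (((B t)ᵀ *ᵥ a t) j) t) :
    HasDerivAt (fun s => a s ⬝ᵥ (B s *ᵥ c s))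
      ((B t *ᵥ c t) ⬝ᵥ (B t *ᵥ c t) + ((B t)ᵀ *ᵥ a t) ⬝ᵥ ((B t)ᵀ *ᵥ a t)
        + (a t ⬝ᵥ a t) * (c t ⬝ᵥ c t)) t := by
  convert hasDerivAt_dotProduct ha (hasDerivAt_mulVec hB hc) using 1
  rw [dotProduct_add, vecMulVec_mulVec, dotProduct_mulVec (a t) (B t), ← mulVec_transpose]
  simp only [op_smul_eq_smul, dotProduct_smul, smul_eq_mul]
  ring

end Matrix

/-- Along any solution, the energy `E = aᵀ B c` satisfies `E' ≥ 3 E^{4/3}`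
whenever `E ≥ 0`; in particular `E` is monotonically nondecreasing. -/
theorem stmt_4 (m : ℕ) (a c : ℝ → Fin m → ℝ) (B : ℝ → Fin m → Fin m → ℝ)
    (ha : ∀ t i, HasDerivAt (fun s => a s i) (∑ j, B t i j * c t j) t)
    (hB : ∀ t i j, HasDerivAt (fun s => B s i j) (a t i * c t j) t)
    (hc : ∀ t j, HasDerivAt (fun s => c s j) (∑ i, B t i j * a t i) t)
    (E : ℝ → ℝ) (hE : ∀ t, E t = ∑ i, ∑ j, a t i * B t i j * c t j) :
    (∀ (t : ℝ) (D : ℝ), HasDerivAt E D t → 0 ≤ E t → 3 * E t ^ ((4:ℝ)/3) ≤ D) ∧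
      Monotone E := by
  obtain rfl : E = fun t => a t ⬝ᵥ (B t *ᵥ c t) :=
    funext fun t => (hE t).trans (sum_sum_mul_mul_eq_dotProduct_mulVec _ _ _)
  -- `ha`, `hB`, `hc` are definitionally the entrywise forms of the matrix equations.
  have hD t := hasDerivAt_energy (B := B) (ha t) (hB t) (hc t)
  refine ⟨fun t D hDt hEt => ?_, monotone_of_deriv_nonneg (fun t => (hD t).differentiableAt)
    fun t => ?_⟩
  · rw [hDt.unique (hD t)]
    exact three_mul_dotProduct_mulVec_rpow_le _ _ _ hEt
  · rw [(hD t).deriv]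
    exact add_nonneg (add_nonneg (dotProduct_self_nonneg _) (dotProduct_self_nonneg _))
      (mul_nonneg (dotProduct_self_nonneg _) (dotProduct_self_nonneg _))
end

section
/- Along any solution of the dynamical system da/dt = Bc, dB/dt = a c^T, dc/dt = B^T a, one has d/dt ‖a'(t)‖² − d/dt ‖c'(t)‖² = 2E(t)(‖c(t)‖² − ‖a(t)‖²), where E = a^T B c. Moreover ‖c(t)‖² − ‖a(t)‖² is constant in time, so ‖a'(t)‖² − ‖c'(t)‖² = ‖a'(0)‖² − ‖c'(0)‖² + (‖a(t)‖² − ‖a(0)‖²)(‖c(0)‖² − ‖a(0)‖²). -/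
/-!
Writing `E = aᵀ B c`, both `‖a‖²` and `‖c‖²` have derivative `2E`, so `K = ‖c‖² − ‖a‖²` is
conserved. Differentiating once more gives `a'' = ‖c‖² a + B c'` and `c'' = ‖a‖² c + Bᵀ a'`; the
cross terms `a'ᵀ B c'` in `d/dt ‖a'‖²` and `d/dt ‖c'‖²` agree and cancel, leaving
`2E (‖c‖² − ‖a‖²) = K · d/dt ‖a‖²`. Hence `‖a'‖² − ‖c'‖² − K ‖a‖²` is constant.
-/

open Matrix

section Calculus

variable {𝕜 ι κ : Type*} [NontriviallyNormedField 𝕜] {t : 𝕜}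

theorem hasDerivAt_dotProduct [Fintype ι] {u v : 𝕜 → ι → 𝕜} {u' v' : ι → 𝕜}
    (hu : HasDerivAt u u' t) (hv : HasDerivAt v v' t) :
    HasDerivAt (fun s => u s ⬝ᵥ v s) (u' ⬝ᵥ v t + u t ⬝ᵥ v') t := by
  simp only [dotProduct, ← Finset.sum_add_distrib]
  exact HasDerivAt.fun_sum fun i _ => (hasDerivAt_pi.1 hu i).fun_mul (hasDerivAt_pi.1 hv i)

theorem hasDerivAt_dotProduct_self [Fintype ι] {u : 𝕜 → ι → 𝕜} {u' : ι → 𝕜}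
    (hu : HasDerivAt u u' t) :
    HasDerivAt (fun s => u s ⬝ᵥ u s) (2 * (u t ⬝ᵥ u')) t :=
  (hasDerivAt_dotProduct hu hu).congr_deriv (by rw [dotProduct_comm]; ring)

theorem hasDerivAt_mulVec [Fintype ι] [Fintype κ] {M : 𝕜 → Matrix ι κ 𝕜} {M' : Matrix ι κ 𝕜}
    {v : 𝕜 → κ → 𝕜} {v' : κ → 𝕜} (hM : HasDerivAt (M : 𝕜 → ι → κ → 𝕜) M' t)
    (hv : HasDerivAt v v' t) :
    HasDerivAt (fun s => M s *ᵥ v s) (M' *ᵥ v t + M t *ᵥ v') t :=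
  hasDerivAt_pi.2 fun i => hasDerivAt_dotProduct (hasDerivAt_pi.1 hM i) hv

theorem hasDerivAt_vecMul [Fintype ι] [Fintype κ] {M : 𝕜 → Matrix ι κ 𝕜} {M' : Matrix ι κ 𝕜}
    {v : 𝕜 → ι → 𝕜} {v' : ι → 𝕜} (hv : HasDerivAt v v' t)
    (hM : HasDerivAt (M : 𝕜 → ι → κ → 𝕜) M' t) :
    HasDerivAt (fun s => v s ᵥ* M s) (v' ᵥ* M t + v t ᵥ* M') t :=
  hasDerivAt_pi.2 fun j => by
    have hcol : HasDerivAt (fun s i => M s i j) (fun i => M' i j) t :=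
      hasDerivAt_pi.2 fun i => hasDerivAt_pi.1 (hasDerivAt_pi.1 hM i) j
    exact hasDerivAt_dotProduct hv hcol

end Calculus

theorem sub_eq_mul_sub_of_hasDerivAt {F G g : ℝ → ℝ} {K : ℝ}
    (hF : ∀ t, HasDerivAt F (K * g t) t) (hG : ∀ t, HasDerivAt G (g t) t) (t s : ℝ) :
    F t - F s = K * (G t - G s) := by
  have hzero : ∀ t, HasDerivAt (fun s => F s - K * G s) 0 t := fun t => by
    simpa using (hF t).fun_sub ((hG t).const_mul K)
  have := is_const_of_deriv_eq_zero (fun t => (hzero t).differentiableAt)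
    (fun t => (hzero t).deriv) t s
  linear_combination this

variable {ι κ : Type*} [Fintype ι] [Fintype κ]

/-- `a' = B c`, `B' = a cᵀ`, `c' = Bᵀ a`: the gradient flow of `E(a, B, c) = aᵀ B c`, with `Bᵀ a`
written as the row vector `a ᵥ* B`. -/
structure IsTrilinearGradientFlow (a : ℝ → ι → ℝ) (B : ℝ → Matrix ι κ ℝ) (c : ℝ → κ → ℝ) :
    Prop where
  hasDerivAt_left : ∀ t, HasDerivAt a (B t *ᵥ c t) t
  hasDerivAt_matrix : ∀ t, HasDerivAt (B : ℝ → ι → κ → ℝ) (vecMulVec (a t) (c t)) t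
  hasDerivAt_right : ∀ t, HasDerivAt c (a t ᵥ* B t) t

namespace IsTrilinearGradientFlow

variable {a : ℝ → ι → ℝ} {B : ℝ → Matrix ι κ ℝ} {c : ℝ → κ → ℝ}

theorem hasDerivAt_dotProduct_self_left (h : IsTrilinearGradientFlow a B c) (t : ℝ) :
    HasDerivAt (fun s => a s ⬝ᵥ a s) (2 * (a t ⬝ᵥ B t *ᵥ c t)) t :=
  hasDerivAt_dotProduct_self (h.hasDerivAt_left t)

theorem hasDerivAt_dotProduct_self_right (h : IsTrilinearGradientFlow a B c) (t : ℝ) :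
    HasDerivAt (fun s => c s ⬝ᵥ c s) (2 * (a t ⬝ᵥ B t *ᵥ c t)) t := by
  refine (hasDerivAt_dotProduct_self (h.hasDerivAt_right t)).congr_deriv ?_
  rw [dotProduct_comm, dotProduct_mulVec]

theorem dotProduct_self_sub_dotProduct_self_eq (h : IsTrilinearGradientFlow a B c) (t s : ℝ) :
    c t ⬝ᵥ c t - a t ⬝ᵥ a t = c s ⬝ᵥ c s - a s ⬝ᵥ a s := by
  have hzero (t : ℝ) : HasDerivAt (fun s => c s ⬝ᵥ c s - a s ⬝ᵥ a s) 0 t := by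
    simpa using
      (h.hasDerivAt_dotProduct_self_right t).fun_sub (h.hasDerivAt_dotProduct_self_left t)
  exact is_const_of_deriv_eq_zero (fun t => (hzero t).differentiableAt)
    (fun t => (hzero t).deriv) t s

theorem hasDerivAt_deriv_left (h : IsTrilinearGradientFlow a B c) (t : ℝ) :
    HasDerivAt (fun s => B s *ᵥ c s) ((c t ⬝ᵥ c t) • a t + B t *ᵥ (a t ᵥ* B t)) t := by
  refine (hasDerivAt_mulVec (h.hasDerivAt_matrix t) (h.hasDerivAt_right t)).congr_deriv ?_
  rw [vecMulVec_mulVec, op_smul_eq_smul]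

theorem hasDerivAt_deriv_right (h : IsTrilinearGradientFlow a B c) (t : ℝ) :
    HasDerivAt (fun s => a s ᵥ* B s) ((B t *ᵥ c t) ᵥ* B t + (a t ⬝ᵥ a t) • c t) t := by
  refine (hasDerivAt_vecMul (h.hasDerivAt_left t) (h.hasDerivAt_matrix t)).congr_deriv ?_
  rw [vecMul_vecMulVec]

theorem hasDerivAt_dotProduct_self_deriv_left_sub_right (h : IsTrilinearGradientFlow a B c)
    (t : ℝ) :
    HasDerivAt (fun s => (B s *ᵥ c s) ⬝ᵥ (B s *ᵥ c s) - (a s ᵥ* B s) ⬝ᵥ (a s ᵥ* B s))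
      (2 * (a t ⬝ᵥ B t *ᵥ c t) * (c t ⬝ᵥ c t - a t ⬝ᵥ a t)) t := by
  refine ((hasDerivAt_dotProduct_self (h.hasDerivAt_deriv_left t)).fun_sub
    (hasDerivAt_dotProduct_self (h.hasDerivAt_deriv_right t))).congr_deriv ?_
  have hcross :
      (B t *ᵥ c t) ⬝ᵥ B t *ᵥ (a t ᵥ* B t) = (a t ᵥ* B t) ⬝ᵥ (B t *ᵥ c t) ᵥ* B t := by
    rw [dotProduct_mulVec, dotProduct_comm]
  have hleft : B t *ᵥ c t ⬝ᵥ a t = a t ⬝ᵥ B t *ᵥ c t := dotProduct_comm _ _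
  have hright : a t ᵥ* B t ⬝ᵥ c t = a t ⬝ᵥ B t *ᵥ c t := (dotProduct_mulVec _ _ _).symm
  simp only [dotProduct_add, dotProduct_smul, smul_eq_mul, hcross, hleft, hright]
  ring

theorem dotProduct_self_deriv_left_sub_right_eq (h : IsTrilinearGradientFlow a B c) (t s : ℝ) :
    (B t *ᵥ c t) ⬝ᵥ (B t *ᵥ c t) - (a t ᵥ* B t) ⬝ᵥ (a t ᵥ* B t)
      = (B s *ᵥ c s) ⬝ᵥ (B s *ᵥ c s) - (a s ᵥ* B s) ⬝ᵥ (a s ᵥ* B s)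
        + (a t ⬝ᵥ a t - a s ⬝ᵥ a s) * (c s ⬝ᵥ c s - a s ⬝ᵥ a s) := by
  have hF (u : ℝ) := (h.hasDerivAt_dotProduct_self_deriv_left_sub_right u).congr_deriv
    (by rw [h.dotProduct_self_sub_dotProduct_self_eq u s, mul_comm])
  linear_combination sub_eq_mul_sub_of_hasDerivAt hF h.hasDerivAt_dotProduct_self_left t s

end IsTrilinearGradientFlow

/-- Along any solution, `d/dt ‖a'‖² − d/dt ‖c'‖² = 2E(‖c‖² − ‖a‖²)`; moreover
`‖c‖² − ‖a‖²` is constant, so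
`‖a'(t)‖² − ‖c'(t)‖² = ‖a'(0)‖² − ‖c'(0)‖² + (‖a(t)‖² − ‖a(0)‖²)(‖c(0)‖² − ‖a(0)‖²)`. -/
theorem stmt_7 (m : ℕ) (a c : ℝ → Fin m → ℝ) (B : ℝ → Fin m → Fin m → ℝ)
    (ha : ∀ t i, HasDerivAt (fun s => a s i) (∑ j, B t i j * c t j) t)
    (hB : ∀ t i j, HasDerivAt (fun s => B s i j) (a t i * c t j) t)
    (hc : ∀ t j, HasDerivAt (fun s => c s j) (∑ i, B t i j * a t i) t)
    (E : ℝ → ℝ) (hE : ∀ t, E t = ∑ i, ∑ j, a t i * B t i j * c t j) :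
    (∀ t : ℝ,
      HasDerivAt
        (fun s => (∑ i, (∑ j, B s i j * c s j) ^ 2) - ∑ j, (∑ i, B s i j * a s i) ^ 2)
        (2 * E t * ((∑ j, c t j ^ 2) - ∑ i, a t i ^ 2)) t) ∧
    (∀ t s : ℝ, (∑ j, c t j ^ 2) - (∑ i, a t i ^ 2)
        = (∑ j, c s j ^ 2) - (∑ i, a s i ^ 2)) ∧
    (∀ t : ℝ,
      (∑ i, (∑ j, B t i j * c t j) ^ 2) - (∑ j, (∑ i, B t i j * a t i) ^ 2)
        = (∑ i, (∑ j, B 0 i j * c 0 j) ^ 2) - (∑ j, (∑ i, B 0 i j * a 0 i) ^ 2)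
          + ((∑ i, a t i ^ 2) - (∑ i, a 0 i ^ 2))
            * ((∑ j, c 0 j ^ 2) - (∑ i, a 0 i ^ 2))) := by
  have h : IsTrilinearGradientFlow a B c :=
    { hasDerivAt_left := fun t => hasDerivAt_pi.2 (ha t)
      hasDerivAt_matrix := fun t => hasDerivAt_pi.2 fun i => hasDerivAt_pi.2 (hB t i)
      hasDerivAt_right := fun t => hasDerivAt_pi.2 fun j => (hc t j).congr_deriv <| by
        simp only [vecMul, dotProduct, mul_comm] }
  have hE' (t : ℝ) : E t = a t ⬝ᵥ B t *ᵥ c t := by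
    simp only [hE, dotProduct, mulVec, Finset.mul_sum, mul_assoc]
  have hsq (v : Fin m → ℝ) : ∑ i, v i ^ 2 = v ⬝ᵥ v := by simp only [dotProduct, sq]
  have hvec (s : ℝ) : (fun j => ∑ i, B s i j * a s i) = a s ᵥ* B s := by
    ext j; simp only [vecMul, dotProduct, mul_comm]
  simp only [hsq, hvec, hE']
  exact ⟨h.hasDerivAt_dotProduct_self_deriv_left_sub_right,
    h.dotProduct_self_sub_dotProduct_self_eq,
    fun t => h.dotProduct_self_deriv_left_sub_right_eq t 0⟩
end

section
/- (Final stage condition is forward-invariant.) Consider the system da/dt = Bc, dB/dt = a c^T, dc/dt = B^T a on a maximal existence interval [0, T*). Suppose at some time t₀ < T* the following hold: (1) for every i, c_i ⟨a, b^i⟩ > 0 and a_i ⟨b_i, c⟩ > 0; (2) for every i, j, ⟨c_i b^i, c_j b^j⟩ > 0 and ⟨a_i b_i, a_j b_j⟩ > 0, where b^i is the i-th column and b_i the i-th row of B. Then these inequalities hold for all t ∈ (t₀, T*). -/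
/-!
Along the flow `c_i' = ⟨a, b^i⟩`, so
`(c_i ⟨a, b^i⟩)' = ⟨a, b^i⟩² + ∑_j ⟨c_i b^i, c_j b^j⟩ + c_i² ‖a‖²`, and
`⟨c_i b^i, c_j b^j⟩'` is a sum of four terms, each a product of the column quantities divided by
a positive square. Hence the column quantities have positive derivative wherever they are all
positive, and a finite family of functions with this property stays positive. The row
conditions are the column conditions of the transposed flow `(c, Bᵀ, a)`.
-/

open Set Filter Topology Finset

lemma HasDerivAt.eventually_lt_nhdsGT {f : ℝ → ℝ} {f' x : ℝ} (hf : HasDerivAt f f' x)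
    (hf' : 0 < f') : ∀ᶠ y in 𝓝[>] x, f x < f y := by
  filter_upwards [(hasDerivAt_iff_tendsto_slope_left_right.1 hf).2.eventually
    (eventually_gt_nhds hf'), self_mem_nhdsWithin] with y hslope hxy
  exact (slope_pos_iff hxy).1 hslope

theorem forall_pos_of_deriv_pos {ι : Type*} [Finite ι] {f : ι → ℝ → ℝ} {t₀ T : ℝ}
    (hf : ∀ t ∈ Ico t₀ T, ∀ i, DifferentiableAt ℝ (f i) t)
    (hf' : ∀ t ∈ Ico t₀ T, (∀ i, 0 < f i t) → ∀ i, 0 < deriv (f i) t)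
    (h₀ : ∀ i, 0 < f i t₀) : ∀ t ∈ Ico t₀ T, ∀ i, 0 < f i t := by
  intro t ht
  have hsub : Icc t₀ t ⊆ Ico t₀ T := Icc_subset_Ico_right ht.2
  have hcont : ContinuousOn (fun s i => f i s) (Icc t₀ t) := fun s hs =>
    continuousAt_pi.2 (fun i => (hf s (hsub hs) i).continuousAt) |>.continuousWithinAt
  -- no `f i` drops below its initial value, a closed condition that propagates to the right
  have hinitial_le : Icc t₀ t ⊆ (fun s i => f i s) ⁻¹' Ici (fun i => f i t₀) := by
    refine IsClosed.Icc_subset_of_forall_mem_nhdsWithin ?_ (mem_preimage.2 self_mem_Ici)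
      fun x ⟨hx, hxI⟩ => ?_
    · rw [inter_comm]
      exact hcont.preimage_isClosed_of_isClosed isClosed_Icc isClosed_Ici
    · have hpos : ∀ i, 0 < f i x := fun i => (h₀ i).trans_le (hx i)
      filter_upwards [eventually_all.2 fun i =>
        (hf x (hsub (Ico_subset_Icc_self hxI)) i).hasDerivAt.eventually_lt_nhdsGT
          (hf' x (hsub (Ico_subset_Icc_self hxI)) hpos i)] with y hy i
      exact (hx i).trans (hy i).le
  exact fun i => (h₀ i).trans_le (hinitial_le ⟨ht.1, le_rfl⟩ i)

theorem sum_col_mul_comm {ι : Type*} [Fintype ι] (u : ι → ℝ) (M : ι → ι → ℝ) (l : ι) :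
    ∑ k, M k l * u k = ∑ k, u k * M k l :=
  sum_congr rfl fun _ _ => mul_comm _ _

theorem sum_const_mul_mul_const_mul {ι : Type*} [Fintype ι] (x y : ℝ) (u v : ι → ℝ) :
    ∑ k, (x * u k) * (y * v k) = x * y * ∑ k, u k * v k := by
  rw [mul_sum]
  exact sum_congr rfl fun _ _ => by ring

-- Each summand times a positive square is a product of hypotheses,
-- e.g. `(p * c' * G) * c ^ 2 = (c * p) * (c * c' * G)`.
theorem colGram_deriv_pos {c c' p p' G : ℝ} (h : 0 < c * p) (h' : 0 < c' * p')
    (hG : 0 < c * c' * G) : 0 < (p * c' + c * p') * G + c * c' * (c * p' + c' * p) := by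
  have hc : 0 < c ^ 2 := by positivity [left_ne_zero_of_mul h.ne']
  have hc' : 0 < c' ^ 2 := by positivity [left_ne_zero_of_mul h'.ne']
  have hpG : 0 < p * c' * G :=
    (mul_pos_iff_of_pos_right hc).1 (by convert mul_pos h hG using 1; ring)
  have hp'G : 0 < c * p' * G :=
    (mul_pos_iff_of_pos_right hc').1 (by convert mul_pos h' hG using 1; ring)
  nlinarith [mul_pos hc h', mul_pos hc' h]

-- `a' = B c`, `B' = a cᵀ`, `c' = Bᵀ a` at time `t`: the gradient flow of `aᵀ B c`
structure IsGradFlowAt {m : ℕ} (a c : ℝ → Fin m → ℝ) (B : ℝ → Fin m → Fin m → ℝ) (t : ℝ) :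
    Prop where
  hasDerivAt_a : ∀ i, HasDerivAt (fun s => a s i) (∑ j, B t i j * c t j) t
  hasDerivAt_B : ∀ i j, HasDerivAt (fun s => B s i j) (a t i * c t j) t
  hasDerivAt_c : ∀ j, HasDerivAt (fun s => c s j) (∑ i, B t i j * a t i) t

-- `c_i ⟨a, b^i⟩` and `⟨c_i b^i, c_j b^j⟩`, where `b^i` is the `i`-th column of `B`
def columnQuantity {m : ℕ} (a c : ℝ → Fin m → ℝ) (B : ℝ → Fin m → Fin m → ℝ) :
    Fin m ⊕ Fin m × Fin m → ℝ → ℝ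
  | .inl i => fun s => c s i * ∑ k, a s k * B s k i
  | .inr (i, j) => fun s => ∑ k, (c s i * B s k i) * (c s j * B s k j)

namespace IsGradFlowAt

variable {m : ℕ} {a c : ℝ → Fin m → ℝ} {B : ℝ → Fin m → Fin m → ℝ} {t : ℝ}

theorem transpose (h : IsGradFlowAt a c B t) : IsGradFlowAt c a (fun s i j => B s j i) t where
  hasDerivAt_a := h.hasDerivAt_c
  hasDerivAt_B i j := (h.hasDerivAt_B j i).congr_deriv (mul_comm _ _)
  hasDerivAt_c := h.hasDerivAt_a

theorem hasDerivAt_colAlign (h : IsGradFlowAt a c B t) (i : Fin m) :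
    HasDerivAt (fun s => c s i * ∑ k, a s k * B s k i)
      ((∑ k, a t k * B t k i) ^ 2 + ∑ j, ∑ k, (c t i * B t k i) * (c t j * B t k j)
        + c t i ^ 2 * ∑ k, a t k ^ 2) t := by
  refine ((h.hasDerivAt_c i).fun_mul (HasDerivAt.fun_sum fun k _ =>
    (h.hasDerivAt_a k).fun_mul (h.hasDerivAt_B k i))).congr_deriv ?_
  rw [sum_col_mul_comm, sum_add_distrib, mul_add, ← add_assoc, sq]
  congr 1
  · congr 1
    simp only [mul_sum, sum_mul]
    rw [sum_comm]
    exact sum_congr rfl fun _ _ => sum_congr rfl fun _ _ => by ring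
  · simp only [mul_sum]
    exact sum_congr rfl fun _ _ => by ring

theorem hasDerivAt_colGram (h : IsGradFlowAt a c B t) (i j : Fin m) :
    HasDerivAt (fun s => ∑ k, (c s i * B s k i) * (c s j * B s k j))
      (((∑ k, a t k * B t k i) * c t j + c t i * ∑ k, a t k * B t k j) * ∑ k, B t k i * B t k j
        + c t i * c t j * (c t i * ∑ k, a t k * B t k j + c t j * ∑ k, a t k * B t k i)) t := by
  simp only [sum_const_mul_mul_const_mul]
  refine (((h.hasDerivAt_c i).fun_mul (h.hasDerivAt_c j)).fun_mul (HasDerivAt.fun_sum fun k _ =>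
    (h.hasDerivAt_B k i).fun_mul (h.hasDerivAt_B k j))).congr_deriv ?_
  have hgram : ∑ k, (a t k * c t i * B t k j + B t k i * (a t k * c t j))
      = c t i * ∑ k, a t k * B t k j + c t j * ∑ k, a t k * B t k i := by
    rw [sum_add_distrib, mul_sum, mul_sum]
    congr 1 <;> exact sum_congr rfl fun _ _ => by ring
  rw [sum_col_mul_comm, sum_col_mul_comm, hgram]

theorem differentiableAt_columnQuantity (h : IsGradFlowAt a c B t) :
    ∀ x, DifferentiableAt ℝ (columnQuantity a c B x) t
  | .inl i => (h.hasDerivAt_colAlign i).differentiableAt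
  | .inr (i, j) => (h.hasDerivAt_colGram i j).differentiableAt

theorem deriv_columnQuantity_pos (h : IsGradFlowAt a c B t)
    (hpos : ∀ x, 0 < columnQuantity a c B x t) : ∀ x, 0 < deriv (columnQuantity a c B x) t
  | .inl i => by
    have hgram : 0 < ∑ j, ∑ k, (c t i * B t k i) * (c t j * B t k j) :=
      sum_pos (fun j _ => hpos (.inr (i, j))) ⟨i, mem_univ i⟩
    rw [columnQuantity, (h.hasDerivAt_colAlign i).deriv]
    exact add_pos_of_pos_of_nonneg (add_pos_of_nonneg_of_pos (sq_nonneg _) hgram)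
      (mul_nonneg (sq_nonneg _) (sum_nonneg fun _ _ => sq_nonneg _))
  | .inr (i, j) => by
    have hij : 0 < c t i * c t j * ∑ k, B t k i * B t k j := by
      simpa only [columnQuantity, sum_const_mul_mul_const_mul] using hpos (.inr (i, j))
    rw [columnQuantity, (h.hasDerivAt_colGram i j).deriv]
    exact colGram_deriv_pos (hpos (.inl i)) (hpos (.inl j)) hij

end IsGradFlowAt

theorem forall_columnQuantity_pos {m : ℕ} {a c : ℝ → Fin m → ℝ} {B : ℝ → Fin m → Fin m → ℝ}
    {t₀ T : ℝ} (h : ∀ t ∈ Ico t₀ T, IsGradFlowAt a c B t)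
    (h₀ : ∀ x, 0 < columnQuantity a c B x t₀) :
    ∀ t ∈ Ico t₀ T, ∀ x, 0 < columnQuantity a c B x t :=
  forall_pos_of_deriv_pos (fun t ht => (h t ht).differentiableAt_columnQuantity)
    (fun t ht => (h t ht).deriv_columnQuantity_pos) h₀

/-- Forward invariance of the final stage condition: if the condition holds at
some time `t₀ < T*`, it holds on all of `(t₀, T*)`. Here `b^i` is the `i`-th
column and `b_i` the `i`-th row of `B`. -/
theorem stmt_10 (m : ℕ) (Tstar : ℝ) (a c : ℝ → Fin m → ℝ)
    (B : ℝ → Fin m → Fin m → ℝ)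
    (ha : ∀ t ∈ Set.Ico (0:ℝ) Tstar, ∀ i,
      HasDerivAt (fun s => a s i) (∑ j, B t i j * c t j) t)
    (hB : ∀ t ∈ Set.Ico (0:ℝ) Tstar, ∀ i j,
      HasDerivAt (fun s => B s i j) (a t i * c t j) t)
    (hc : ∀ t ∈ Set.Ico (0:ℝ) Tstar, ∀ j,
      HasDerivAt (fun s => c s j) (∑ i, B t i j * a t i) t)
    (t₀ : ℝ) (ht₀ : t₀ ∈ Set.Ico (0:ℝ) Tstar)
    (h1 : ∀ i, 0 < c t₀ i * ∑ k, a t₀ k * B t₀ k i)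
    (h1' : ∀ i, 0 < a t₀ i * ∑ k, B t₀ i k * c t₀ k)
    (h2 : ∀ i j, 0 < ∑ k, (c t₀ i * B t₀ k i) * (c t₀ j * B t₀ k j))
    (h2' : ∀ i j, 0 < ∑ k, (a t₀ i * B t₀ i k) * (a t₀ j * B t₀ j k)) :
    ∀ t ∈ Set.Ioo t₀ Tstar,
      (∀ i, 0 < c t i * ∑ k, a t k * B t k i) ∧
      (∀ i, 0 < a t i * ∑ k, B t i k * c t k) ∧
      (∀ i j, 0 < ∑ k, (c t i * B t k i) * (c t j * B t k j)) ∧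
      (∀ i j, 0 < ∑ k, (a t i * B t i k) * (a t j * B t j k)) := by
  have hflow : ∀ t ∈ Ico t₀ Tstar, IsGradFlowAt a c B t := fun t ht =>
    have ht' : t ∈ Ico 0 Tstar := ⟨ht₀.1.trans ht.1, ht.2⟩
    ⟨ha t ht', hB t ht', hc t ht'⟩
  have hcol := forall_columnQuantity_pos hflow (Sum.forall.2 ⟨h1, fun ⟨i, j⟩ => h2 i j⟩)
  have hrow := forall_columnQuantity_pos (fun t ht => (hflow t ht).transpose) (Sum.forall.2
    ⟨fun i => by simpa only [columnQuantity, mul_comm (B t₀ i _)] using h1' i,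
      fun ⟨i, j⟩ => h2' i j⟩)
  intro t ht
  have ht' : t ∈ Ico t₀ Tstar := Ioo_subset_Ico_self ht
  refine ⟨fun i => hcol t ht' (.inl i), fun i => ?_, fun i j => hcol t ht' (.inr (i, j)),
    fun i j => hrow t ht' (.inr (i, j))⟩
  simpa only [columnQuantity, mul_comm (c t _)] using hrow t ht' (.inl i)
end

section
/- (Forward invariance of the final stage condition for matrix completion.) Consider curves a_i : ℝ → ℝ^m (i = 1,…,n), B : ℝ → ℝ^{m×m}, c_i : ℝ → ℝ^m and nonzero constants λ_i satisfying a_i' = λ_i B c_i, B' = Σ_i λ_i a_i c_i^T, c_i' = λ_i B^T a_i, on a maximal interval [0, T*). Suppose at some t₀ < T*: (1) λ_i c_{i,j} ⟨a_i, b^j⟩ > 0 and λ_i a_{i,j} ⟨b_j, c_i⟩ > 0 for all i, j; (2) ⟨c_{i,k} b^k, c_{i,j} b^j⟩ > 0 and ⟨a_{i,k} b_k, a_{i,j} b_j⟩ > 0 for all i, j, k; (3) λ_i λ_j a_{i,k} a_{j,k} c_{i,l} c_{j,l} > 0 for all i, j, k, l. Then all these inequalities hold for all t ∈ (t₀, T*).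 -/
/-!
Along the flow, the derivative of each quantity in conditions (1)–(3) is a sum of squares, of
nonnegative multiples of the quantities, and of terms whose product with the square of an entry
of `a` or `c` is a product of two of the quantities (e.g. `(d/dt) λ_i λ_j a_ik a_jk c_il c_jl`
contains `λ_i λ_j a_ik' a_jk c_il c_jl`, whose product with `a_ik²` is the product of conditions
(1) and (3)). Hence every derivative is nonnegative as long as all the quantities are positive,
and a barrier argument at the first time one of them would vanish shows that none does. The
exchange `a ↔ c`, `B ↔ Bᵀ` preserves the flow and the conditions, which halves the computations.
-/

open Finset Set

theorem pos_of_mul_sq_eq_mul {α : Type*} [CommRing α] [LinearOrder α] [IsStrictOrderedRing α]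
    {x y u v : α} (hu : 0 < u) (hv : 0 < v) (h : x * y ^ 2 = u * v) : 0 < x :=
  pos_of_mul_pos_left (h ▸ mul_pos hu hv) (sq_nonneg y)

theorem forall_pos_of_hasDerivAt_nonneg {ι : Type*} [Finite ι] {f : ι → ℝ → ℝ} {a b : ℝ}
    (hab : a ≤ b)
    (hf : ∀ t ∈ Icc a b, ∀ i, ∃ d, HasDerivAt (f i) d t ∧ ((∀ j, 0 < f j t) → 0 ≤ d))
    (ha : ∀ i, 0 < f i a) : ∀ i, 0 < f i b := by
  by_contra! hb
  have hcont : ∀ i, ContinuousOn (f i) (Icc a b) := fun i t ht =>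
    (hf t ht i).choose_spec.1.continuousAt.continuousWithinAt
  -- `sInf E` is the first time some `f i` is `≤ 0`; before it all are positive, so nondecreasing
  set E := ⋃ i, Icc a b ∩ f i ⁻¹' Iic 0
  have hE_closed : IsClosed E := isClosed_iUnion_of_finite fun i =>
    (hcont i).preimage_isClosed_of_isClosed isClosed_Icc isClosed_Iic
  have hE_bdd : BddBelow E := ⟨a, fun s hs => by
    obtain ⟨i, hi, -⟩ := mem_iUnion.1 hs
    exact hi.1⟩
  obtain ⟨i₁, hi₁⟩ := hb
  have hτ : sInf E ∈ E :=
    hE_closed.csInf_mem ⟨b, mem_iUnion.2 ⟨i₁, ⟨hab, le_rfl⟩, hi₁⟩⟩ hE_bdd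
  obtain ⟨i₀, hτab, hi₀⟩ := mem_iUnion.1 hτ
  have hpos : ∀ s ∈ Ico a (sInf E), ∀ i, 0 < f i s := by
    intro s hs i
    by_contra! h
    exact (csInf_le hE_bdd (mem_iUnion.2 ⟨i, ⟨hs.1, hs.2.le.trans hτab.2⟩, h⟩)).not_gt hs.2
  have hsub : Icc a (sInf E) ⊆ Icc a b := Icc_subset_Icc_right hτab.2
  have hderiv : ∀ s ∈ interior (Icc a (sInf E)), ∃ d, HasDerivAt (f i₀) d s ∧ 0 ≤ d := by
    intro s hs
    rw [interior_Icc] at hs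
    obtain ⟨d, hd, hsign⟩ := hf s (hsub (Ioo_subset_Icc_self hs)) i₀
    exact ⟨d, hd, hsign (hpos s (Ioo_subset_Ico_self hs))⟩
  have hmono : MonotoneOn (f i₀) (Icc a (sInf E)) :=
    monotoneOn_of_deriv_nonneg (convex_Icc _ _) ((hcont i₀).mono hsub)
      (fun s hs => (hderiv s hs).choose_spec.1.differentiableAt.differentiableWithinAt)
      (fun s hs => by
        obtain ⟨d, hd, hnn⟩ := hderiv s hs
        rwa [hd.deriv])
  exact (ha i₀).not_ge (le_trans (hmono ⟨le_rfl, hτab.1⟩ ⟨hτab.1, le_rfl⟩ hτab.1) hi₀)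

section Static

variable {n m : ℕ} (lam : Fin n → ℝ) (A C : Fin n → Fin m → ℝ) (M : Fin m → Fin m → ℝ)

-- The right-hand sides `a_i' = λ_i B c_i`, `B' = ∑ λ_i a_i c_iᵀ`, `c_i' = λ_i Bᵀ a_i`.
def flowA : Fin n → Fin m → ℝ := fun i k => lam i * ∑ j, M k j * C i j

def flowB : Fin m → Fin m → ℝ := fun k l => ∑ i, lam i * A i k * C i l

def flowC : Fin n → Fin m → ℝ := fun i j => lam i * ∑ k, M k j * A i k

-- Conditions (1), (2) (each for `c` and for `a`) and (3) for the state `a_i = A i`, `c_i = C i`,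
-- `B = M`.
def FinalStage : Prop :=
  (∀ i j, 0 < lam i * C i j * ∑ k, A i k * M k j) ∧
  (∀ i j, 0 < lam i * A i j * ∑ k, M j k * C i k) ∧
  (∀ i j k, 0 < ∑ l, (C i k * M l k) * (C i j * M l j)) ∧
  (∀ i j k, 0 < ∑ l, (A i k * M k l) * (A i j * M j l)) ∧
  (∀ i j k l, 0 < lam i * lam j * A i k * A j k * C i l * C j l)

variable {lam A C M}

theorem flowB_swap (k l : Fin m) : flowB lam C A k l = flowB lam A C l k :=
  sum_congr rfl fun _ _ => mul_right_comm _ _ _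

theorem FinalStage.swap (h : FinalStage lam A C M) : FinalStage lam C A fun k l => M l k := by
  obtain ⟨h1, h1', h2, h2', h3⟩ := h
  refine ⟨fun i j => ?_, fun i j => ?_, h2', h2, fun i j k l => ?_⟩
  · simpa only [mul_comm (M _ _)] using h1' i j
  · simpa only [mul_comm (M _ _)] using h1 i j
  · linarith [h3 i j l k]

theorem FinalStage.col_mul_col_pos (h : FinalStage lam A C M) (i p : Fin n) (j k : Fin m) :
    0 < C i k * C p k * (C i j * C p j) :=
  pos_of_mul_sq_eq_mul (y := lam i * lam p * A i k * A p k) (h.2.2.2.2 i p k k)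
    (h.2.2.2.2 i p k j) (by ring)

theorem FinalStage.flow_cond1_nonneg (h : FinalStage lam A C M) (i : Fin n) (j : Fin m) :
    0 ≤ lam i * flowC lam A M i j * ∑ k, A i k * M k j
      + lam i * C i j * ∑ k, (flowA lam C M i k * M k j + A i k * flowB lam A C k j) := by
  have hC : lam i * flowC lam A M i j * ∑ k, A i k * M k j
      = (lam i * ∑ k, A i k * M k j) ^ 2 := by
    simp only [flowC, mul_comm (M _ j)]
    ring
  have hA : lam i * C i j * ∑ k, flowA lam C M i k * M k j
      = lam i ^ 2 * ∑ l, ∑ k, (C i l * M k l) * (C i j * M k j) := by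
    simp only [flowA, mul_sum, sum_mul]
    rw [sum_comm]
    exact sum_congr rfl fun _ _ => sum_congr rfl fun _ _ => by ring
  have hB : lam i * C i j * ∑ k, A i k * flowB lam A C k j
      = ∑ k, ∑ p, lam i * lam p * A i k * A p k * C i j * C p j := by
    simp only [flowB, mul_sum]
    exact sum_congr rfl fun _ _ => sum_congr rfl fun _ _ => by ring
  rw [sum_add_distrib, mul_add, hC, hA, hB]
  exact add_nonneg (sq_nonneg _) (add_nonneg
    (mul_nonneg (sq_nonneg _) (sum_nonneg fun l _ => (h.2.2.1 i j l).le))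
    (sum_nonneg fun k _ => sum_nonneg fun p _ => (h.2.2.2.2 i p k j).le))

theorem FinalStage.flow_cond2_half_nonneg (h : FinalStage lam A C M) (i : Fin n) (j k : Fin m) :
    0 ≤ ∑ l, (flowC lam A M i k * M l k + C i k * flowB lam A C l k) * (C i j * M l j) := by
  have hsplit : ∑ l, (flowC lam A M i k * M l k + C i k * flowB lam A C l k) * (C i j * M l j)
      = lam i * (∑ q, A i q * M q k) * C i j * ∑ l, M l k * M l j
        + ∑ p, lam p * C p k * C i k * C i j * ∑ l, A p l * M l j := by
    simp only [flowC, flowB, add_mul, sum_add_distrib, mul_sum, sum_mul, mul_comm (M _ k) (A _ _)]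
    congr 1
    · exact sum_congr rfl fun _ _ => sum_congr rfl fun _ _ => by ring
    · rw [sum_comm]
      exact sum_congr rfl fun _ _ => sum_congr rfl fun _ _ => by ring
  have hgram : ∑ l, (C i k * M l k) * (C i j * M l j) = C i k * C i j * ∑ l, M l k * M l j := by
    rw [mul_sum]
    exact sum_congr rfl fun _ _ => by ring
  rw [hsplit]
  refine add_nonneg (pos_of_mul_sq_eq_mul (y := C i k) (h.1 i k) (h.2.2.1 i j k) ?_).le
    (sum_nonneg fun p _ => (pos_of_mul_sq_eq_mul (y := C p j) (h.1 p j)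
      (h.col_mul_col_pos i p j k) ?_).le)
  · rw [hgram]; ring
  · ring

theorem FinalStage.flow_cond2_nonneg (h : FinalStage lam A C M) (i : Fin n) (j k : Fin m) :
    0 ≤ ∑ l, ((flowC lam A M i k * M l k + C i k * flowB lam A C l k) * (C i j * M l j)
      + (C i k * M l k) * (flowC lam A M i j * M l j + C i j * flowB lam A C l j)) := by
  rw [sum_add_distrib]
  refine add_nonneg (h.flow_cond2_half_nonneg i j k) ?_
  simpa only [mul_comm (C i k * M _ k)] using h.flow_cond2_half_nonneg i k j

theorem FinalStage.flow_cond3_term_nonneg (h : FinalStage lam A C M) (i j : Fin n) (k l : Fin m) :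
    0 ≤ lam i * lam j * flowA lam C M i k * A j k * C i l * C j l :=
  (pos_of_mul_sq_eq_mul (y := A i k) (h.2.1 i k) (h.2.2.2.2 i j k l)
    (by simp only [flowA]; ring)).le

theorem FinalStage.flow_cond3_nonneg (h : FinalStage lam A C M) (i j : Fin n) (k l : Fin m) :
    0 ≤ (((lam i * lam j * flowA lam C M i k) * A j k
          + (lam i * lam j * A i k) * flowA lam C M j k) * C i l
        + (lam i * lam j * A i k * A j k) * flowC lam A M i l) * C j l
      + (lam i * lam j * A i k * A j k * C i l) * flowC lam A M j l := by
  have hAi := h.flow_cond3_term_nonneg i j k l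
  have hAj := h.flow_cond3_term_nonneg j i k l
  have hCi : 0 ≤ lam i * lam j * flowC lam A M i l * C j l * A i k * A j k :=
    h.swap.flow_cond3_term_nonneg i j l k
  have hCj : 0 ≤ lam j * lam i * flowC lam A M j l * C i l * A j k * A i k :=
    h.swap.flow_cond3_term_nonneg j i l k
  linarith

end Static

section Flow

variable {n m : ℕ} {lam : Fin n → ℝ} {a c : Fin n → ℝ → Fin m → ℝ} {B : ℝ → Fin m → Fin m → ℝ}
  {t : ℝ}

variable (lam a c B t) in
structure IsFlowAt : Prop where
  hasDerivAt_a : ∀ i k, HasDerivAt (fun s => a i s k) (flowA lam (c · t) (B t) i k) t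
  hasDerivAt_B : ∀ k l, HasDerivAt (fun s => B s k l) (flowB lam (a · t) (c · t) k l) t
  hasDerivAt_c : ∀ i j, HasDerivAt (fun s => c i s j) (flowC lam (a · t) (B t) i j) t

theorem IsFlowAt.swap (h : IsFlowAt lam a c B t) : IsFlowAt lam c a (fun s k l => B s l k) t where
  hasDerivAt_a := h.hasDerivAt_c
  hasDerivAt_B k l := flowB_swap (C := fun i => c i t) k l ▸ h.hasDerivAt_B l k
  hasDerivAt_c := h.hasDerivAt_a

theorem IsFlowAt.exists_hasDerivAt_cond1 (h : IsFlowAt lam a c B t) (i : Fin n) (j : Fin m) :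
    ∃ d, HasDerivAt (fun s => lam i * c i s j * ∑ k, a i s k * B s k j) d t ∧
      (FinalStage lam (a · t) (c · t) (B t) → 0 ≤ d) :=
  ⟨_, ((h.hasDerivAt_c i j).const_mul (lam i)).mul
    (HasDerivAt.fun_sum fun k _ => (h.hasDerivAt_a i k).mul (h.hasDerivAt_B k j)),
    fun hs => hs.flow_cond1_nonneg i j⟩

theorem IsFlowAt.exists_hasDerivAt_cond1' (h : IsFlowAt lam a c B t) (i : Fin n) (j : Fin m) :
    ∃ d, HasDerivAt (fun s => lam i * a i s j * ∑ k, B s j k * c i s k) d t ∧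
      (FinalStage lam (a · t) (c · t) (B t) → 0 ≤ d) := by
  obtain ⟨d, hd, hsign⟩ := h.swap.exists_hasDerivAt_cond1 i j
  simp only [mul_comm (c i _ _)] at hd
  exact ⟨d, hd, fun hs => hsign hs.swap⟩

theorem IsFlowAt.exists_hasDerivAt_cond2 (h : IsFlowAt lam a c B t) (i : Fin n) (j k : Fin m) :
    ∃ d, HasDerivAt (fun s => ∑ l, (c i s k * B s l k) * (c i s j * B s l j)) d t ∧
      (FinalStage lam (a · t) (c · t) (B t) → 0 ≤ d) :=
  ⟨_, HasDerivAt.fun_sum fun l _ => ((h.hasDerivAt_c i k).mul (h.hasDerivAt_B l k)).mul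
    ((h.hasDerivAt_c i j).mul (h.hasDerivAt_B l j)), fun hs => hs.flow_cond2_nonneg i j k⟩

theorem IsFlowAt.exists_hasDerivAt_cond2' (h : IsFlowAt lam a c B t) (i : Fin n) (j k : Fin m) :
    ∃ d, HasDerivAt (fun s => ∑ l, (a i s k * B s k l) * (a i s j * B s j l)) d t ∧
      (FinalStage lam (a · t) (c · t) (B t) → 0 ≤ d) :=
  let ⟨d, hd, hsign⟩ := h.swap.exists_hasDerivAt_cond2 i j k
  ⟨d, hd, fun hs => hsign hs.swap⟩

theorem IsFlowAt.exists_hasDerivAt_cond3 (h : IsFlowAt lam a c B t) (i j : Fin n) (k l : Fin m) :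
    ∃ d, HasDerivAt (fun s => lam i * lam j * a i s k * a j s k * c i s l * c j s l) d t ∧
      (FinalStage lam (a · t) (c · t) (B t) → 0 ≤ d) :=
  ⟨_, ((((h.hasDerivAt_a i k).const_mul (lam i * lam j)).mul (h.hasDerivAt_a j k)).mul
    (h.hasDerivAt_c i l)).mul (h.hasDerivAt_c j l), fun hs => hs.flow_cond3_nonneg i j k l⟩

abbrev FinalStageIndex (n m : ℕ) :=
  (Fin n × Fin m) ⊕ (Fin n × Fin m) ⊕ (Fin n × Fin m × Fin m) ⊕ (Fin n × Fin m × Fin m) ⊕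
    (Fin n × Fin n × Fin m × Fin m)

variable (lam a c B) in
def finalStageQuantity : FinalStageIndex n m → ℝ → ℝ
  | .inl (i, j) => fun t => lam i * c i t j * ∑ k, a i t k * B t k j
  | .inr (.inl (i, j)) => fun t => lam i * a i t j * ∑ k, B t j k * c i t k
  | .inr (.inr (.inl (i, j, k))) => fun t => ∑ l, (c i t k * B t l k) * (c i t j * B t l j)
  | .inr (.inr (.inr (.inl (i, j, k)))) => fun t => ∑ l, (a i t k * B t k l) * (a i t j * B t j l)
  | .inr (.inr (.inr (.inr (i, j, k, l)))) => fun t =>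
      lam i * lam j * a i t k * a j t k * c i t l * c j t l

theorem forall_finalStageQuantity_pos_iff :
    (∀ p, 0 < finalStageQuantity lam a c B p t) ↔ FinalStage lam (a · t) (c · t) (B t) := by
  constructor
  · intro h
    exact ⟨fun i j => h (.inl (i, j)), fun i j => h (.inr (.inl (i, j))),
      fun i j k => h (.inr (.inr (.inl (i, j, k)))),
      fun i j k => h (.inr (.inr (.inr (.inl (i, j, k))))),
      fun i j k l => h (.inr (.inr (.inr (.inr (i, j, k, l)))))⟩
  · rintro ⟨h1, h1', h2, h2', h3⟩ (⟨i, j⟩ | ⟨i, j⟩ | ⟨i, j, k⟩ | ⟨i, j, k⟩ | ⟨i, j, k, l⟩)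
    exacts [h1 i j, h1' i j, h2 i j k, h2' i j k, h3 i j k l]

theorem IsFlowAt.exists_hasDerivAt_finalStageQuantity (h : IsFlowAt lam a c B t)
    (p : FinalStageIndex n m) :
    ∃ d, HasDerivAt (finalStageQuantity lam a c B p) d t ∧
      ((∀ q, 0 < finalStageQuantity lam a c B q t) → 0 ≤ d) := by
  rw [forall_finalStageQuantity_pos_iff]
  rcases p with ⟨i, j⟩ | ⟨i, j⟩ | ⟨i, j, k⟩ | ⟨i, j, k⟩ | ⟨i, j, k, l⟩
  exacts [h.exists_hasDerivAt_cond1 i j, h.exists_hasDerivAt_cond1' i j,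
    h.exists_hasDerivAt_cond2 i j k, h.exists_hasDerivAt_cond2' i j k,
    h.exists_hasDerivAt_cond3 i j k l]

end Flow

theorem stmt_16_general (n m : ℕ) (Tstar : ℝ) (a c : Fin n → ℝ → Fin m → ℝ)
    (B : ℝ → Fin m → Fin m → ℝ) (lam : Fin n → ℝ)
    (ha : ∀ t ∈ Set.Ico (0:ℝ) Tstar, ∀ (i : Fin n) (k : Fin m),
      HasDerivAt (fun s => a i s k) (lam i * ∑ j, B t k j * c i t j) t)
    (hB : ∀ t ∈ Set.Ico (0:ℝ) Tstar, ∀ (k l : Fin m),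
      HasDerivAt (fun s => B s k l) (∑ i, lam i * a i t k * c i t l) t)
    (hc : ∀ t ∈ Set.Ico (0:ℝ) Tstar, ∀ (i : Fin n) (j : Fin m),
      HasDerivAt (fun s => c i s j) (lam i * ∑ k, B t k j * a i t k) t)
    (t₀ : ℝ) (ht₀ : t₀ ∈ Set.Ico (0:ℝ) Tstar)
    (h1 : ∀ (i : Fin n) (j : Fin m),
      0 < lam i * c i t₀ j * ∑ k, a i t₀ k * B t₀ k j)
    (h1' : ∀ (i : Fin n) (j : Fin m),
      0 < lam i * a i t₀ j * ∑ k, B t₀ j k * c i t₀ k)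
    (h2 : ∀ (i : Fin n) (j k : Fin m),
      0 < ∑ l, (c i t₀ k * B t₀ l k) * (c i t₀ j * B t₀ l j))
    (h2' : ∀ (i : Fin n) (j k : Fin m),
      0 < ∑ l, (a i t₀ k * B t₀ k l) * (a i t₀ j * B t₀ j l))
    (h3 : ∀ (i j : Fin n) (k l : Fin m),
      0 < lam i * lam j * a i t₀ k * a j t₀ k * c i t₀ l * c j t₀ l) :
    ∀ t ∈ Set.Ioo t₀ Tstar,
      (∀ (i : Fin n) (j : Fin m), 0 < lam i * c i t j * ∑ k, a i t k * B t k j) ∧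
      (∀ (i : Fin n) (j : Fin m), 0 < lam i * a i t j * ∑ k, B t j k * c i t k) ∧
      (∀ (i : Fin n) (j k : Fin m),
        0 < ∑ l, (c i t k * B t l k) * (c i t j * B t l j)) ∧
      (∀ (i : Fin n) (j k : Fin m),
        0 < ∑ l, (a i t k * B t k l) * (a i t j * B t j l)) ∧
      (∀ (i j : Fin n) (k l : Fin m),
        0 < lam i * lam j * a i t k * a j t k * c i t l * c j t l) := by
  intro t ht
  have hflow : ∀ s ∈ Icc t₀ t, IsFlowAt lam a c B s := fun s hs =>
    have hs' : s ∈ Ico 0 Tstar := ⟨ht₀.1.trans hs.1, hs.2.trans_lt ht.2⟩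
    ⟨ha s hs', hB s hs', hc s hs'⟩
  show FinalStage lam (a · t) (c · t) (B t)
  rw [← forall_finalStageQuantity_pos_iff]
  exact forall_pos_of_hasDerivAt_nonneg ht.1.le
    (fun s hs => (hflow s hs).exists_hasDerivAt_finalStageQuantity)
    (forall_finalStageQuantity_pos_iff.2 ⟨h1, h1', h2, h2', h3⟩)

/-- Forward invariance of the final stage condition for matrix completion. -/
theorem stmt_16 (n m : ℕ) (Tstar : ℝ) (a c : Fin n → ℝ → Fin m → ℝ)
    (B : ℝ → Fin m → Fin m → ℝ) (lam : Fin n → ℝ) (hlam : ∀ i, lam i ≠ 0)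
    (ha : ∀ t ∈ Set.Ico (0:ℝ) Tstar, ∀ (i : Fin n) (k : Fin m),
      HasDerivAt (fun s => a i s k) (lam i * ∑ j, B t k j * c i t j) t)
    (hB : ∀ t ∈ Set.Ico (0:ℝ) Tstar, ∀ (k l : Fin m),
      HasDerivAt (fun s => B s k l) (∑ i, lam i * a i t k * c i t l) t)
    (hc : ∀ t ∈ Set.Ico (0:ℝ) Tstar, ∀ (i : Fin n) (j : Fin m),
      HasDerivAt (fun s => c i s j) (lam i * ∑ k, B t k j * a i t k) t)
    (t₀ : ℝ) (ht₀ : t₀ ∈ Set.Ico (0:ℝ) Tstar)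
    (h1 : ∀ (i : Fin n) (j : Fin m),
      0 < lam i * c i t₀ j * ∑ k, a i t₀ k * B t₀ k j)
    (h1' : ∀ (i : Fin n) (j : Fin m),
      0 < lam i * a i t₀ j * ∑ k, B t₀ j k * c i t₀ k)
    (h2 : ∀ (i : Fin n) (j k : Fin m),
      0 < ∑ l, (c i t₀ k * B t₀ l k) * (c i t₀ j * B t₀ l j))
    (h2' : ∀ (i : Fin n) (j k : Fin m),
      0 < ∑ l, (a i t₀ k * B t₀ k l) * (a i t₀ j * B t₀ j l))
    (h3 : ∀ (i j : Fin n) (k l : Fin m),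
      0 < lam i * lam j * a i t₀ k * a j t₀ k * c i t₀ l * c j t₀ l) :
    ∀ t ∈ Set.Ioo t₀ Tstar,
      (∀ (i : Fin n) (j : Fin m), 0 < lam i * c i t j * ∑ k, a i t k * B t k j) ∧
      (∀ (i : Fin n) (j : Fin m), 0 < lam i * a i t j * ∑ k, B t j k * c i t k) ∧
      (∀ (i : Fin n) (j k : Fin m),
        0 < ∑ l, (c i t k * B t l k) * (c i t j * B t l j)) ∧
      (∀ (i : Fin n) (j k : Fin m),
        0 < ∑ l, (a i t k * B t k l) * (a i t j * B t j l)) ∧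
      (∀ (i j : Fin n) (k l : Fin m),
        0 < lam i * lam j * a i t k * a j t k * c i t l * c j t l) :=
  stmt_16_general n m Tstar a c B lam ha hB hc t₀ ht₀ h1 h1' h2 h2' h3
end

section
/- For vectors a, c ∈ ℝ^m and a matrix B ∈ ℝ^{m×m}, the quantity ‖Bc‖² + ‖B^T a‖² + ‖a‖²‖c‖² is bounded below by 3(a^T B c)^{4/3} whenever a^T B c ≥ 0. -/
/-- Pointwise AM–GM/Cauchy–Schwarz inequality:
`‖Bc‖² + ‖Bᵀa‖² + ‖a‖²‖c‖² ≥ 3 (aᵀBc)^{4/3}` whenever `aᵀBc ≥ 0`. -/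
theorem stmt_18 (m : ℕ) (a c : Fin m → ℝ) (B : Fin m → Fin m → ℝ)
    (h : 0 ≤ ∑ i, ∑ j, a i * B i j * c j) :
    3 * (∑ i, ∑ j, a i * B i j * c j) ^ ((4:ℝ)/3)
      ≤ (∑ i, (∑ j, B i j * c j) ^ 2) + (∑ j, (∑ i, B i j * a i) ^ 2)
        + (∑ i, a i ^ 2) * (∑ j, c j ^ 2) := by
  set S := ∑ i, ∑ j, a i * B i j * c j with hS
  set X := ∑ i, (∑ j, B i j * c j) ^ 2 with hX
  set Y := ∑ j, (∑ i, B i j * a i) ^ 2 with hY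
  set P := ∑ i, a i ^ 2 with hP
  set Q := ∑ j, c j ^ 2 with hQ
  have hX0 : 0 ≤ X := Finset.sum_nonneg fun _ _ => sq_nonneg _
  have hY0 : 0 ≤ Y := Finset.sum_nonneg fun _ _ => sq_nonneg _
  have hP0 : 0 ≤ P := Finset.sum_nonneg fun _ _ => sq_nonneg _
  have hQ0 : 0 ≤ Q := Finset.sum_nonneg fun _ _ => sq_nonneg _
  -- Cauchy–Schwarz 1: S² ≤ P * X
  have cs1 : S ^ 2 ≤ P * X := by
    have h1 : S = ∑ i, a i * (∑ j, B i j * c j) := by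
      rw [hS]
      exact Finset.sum_congr rfl fun i _ => by rw [Finset.mul_sum]; exact Finset.sum_congr rfl fun _ _ => by ring
    rw [h1]
    simpa using Finset.sum_mul_sq_le_sq_mul_sq Finset.univ a (fun i => ∑ j, B i j * c j)
  -- Cauchy–Schwarz 2: S² ≤ Y * Q
  have cs2 : S ^ 2 ≤ Y * Q := by
    have h2 : S = ∑ j, (∑ i, B i j * a i) * c j := by
      rw [hS, Finset.sum_comm]
      exact Finset.sum_congr rfl fun j _ => by rw [Finset.sum_mul]; exact Finset.sum_congr rfl fun _ _ => by ring
    rw [h2]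
    simpa using Finset.sum_mul_sq_le_sq_mul_sq Finset.univ (fun j => ∑ i, B i j * a i) c
  -- S⁴ ≤ X * Y * (P * Q)
  have h4 : S ^ (4:ℕ) ≤ X * Y * (P * Q) := by
    have := mul_le_mul cs1 cs2 (sq_nonneg S) (mul_nonneg hP0 hX0)
    calc S ^ (4:ℕ) = S ^ 2 * S ^ 2 := by ring
      _ ≤ (P * X) * (Y * Q) := this
      _ = X * Y * (P * Q) := by ring
  -- S^{4/3} = (S⁴)^{1/3}
  have hS43 : S ^ ((4:ℝ)/3) = (S ^ (4:ℕ)) ^ ((1:ℝ)/3) := by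
    rw [← Real.rpow_natCast S 4, ← Real.rpow_mul h]
    norm_num
  have hxyz : (S ^ (4:ℕ)) ^ ((1:ℝ)/3) ≤ X ^ ((1:ℝ)/3) * Y ^ ((1:ℝ)/3) * (P * Q) ^ ((1:ℝ)/3) := by
    rw [← Real.mul_rpow hX0 hY0,
      ← Real.mul_rpow (mul_nonneg hX0 hY0) (mul_nonneg hP0 hQ0)]
    exact Real.rpow_le_rpow (pow_nonneg h 4) h4 (by norm_num)
  have amgm : X ^ ((1:ℝ)/3) * Y ^ ((1:ℝ)/3) * (P * Q) ^ ((1:ℝ)/3)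
      ≤ (1/3) * X + (1/3) * Y + (1/3) * (P * Q) :=
    Real.geom_mean_le_arith_mean3_weighted (by norm_num) (by norm_num) (by norm_num)
      hX0 hY0 (mul_nonneg hP0 hQ0) (by norm_num)
  rw [hS43]
  nlinarith [hxyz, amgm]
end
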